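/- arXiv:2202.09591 — 5 statements merged into one kernel-verified Lean document; each statement's English description precedes it below -/
import Mathlib

section
/- Let V₀ → V₁ → ... → V_N be a finite persistence module of finite-dimensional Q-vector spaces (with maps i^{j,k} for j ≤ k given by compositions of the consecutive maps), and set V_{-1} = 0. For 0 ≤ j ≤ k ≤ N define b^{j,k} = rank(i^{j,k}) and the persistent multiplicity μ^{j,k} = dim(M^{j,k}) - dim(N^{j,k}), where M^{j,k} = (i^{j,k})⁻¹(Im(i^{j-1,k})) and N^{j,k} = (i^{j,k-1})⁻¹(Im(i^{j-1,k-1})). Then for 0 < j ≤ k < N+1: μ^{j,k} = (b^{j,k-1} - b^{j,k}) - (b^{j-1,k-1} - b^{j-1,k}). -/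
lemma finrank_comap_of_le' {V W : Type*} [AddCommGroup V] [Module ℚ V]
    [AddCommGroup W] [Module ℚ W] [FiniteDimensional ℚ V]
    (f : V →ₗ[ℚ] W) (S : Submodule ℚ W) (hS : S ≤ LinearMap.range f) :
    Module.finrank ℚ (Submodule.comap f S) =
      Module.finrank ℚ (LinearMap.ker f) + Module.finrank ℚ S := by
  set p := Submodule.comap f S
  have hker : LinearMap.ker f ≤ p := fun x hx => by
    simp [p, Submodule.mem_comap, LinearMap.mem_ker.mp hx]
  have g := f.domRestrict p
  have h1 := LinearMap.finrank_range_add_finrank_ker (f.domRestrict p)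
  have hrange : LinearMap.range (f.domRestrict p) = S := by
    rw [LinearMap.range_domRestrict]
    rw [Submodule.map_comap_eq, inf_eq_right.mpr hS]
  have hkerd : LinearMap.ker (f.domRestrict p) = Submodule.comap p.subtype (LinearMap.ker f) := by
    ext x; simp [LinearMap.mem_ker]
  have hkeq : Module.finrank ℚ (LinearMap.ker (f.domRestrict p)) =
      Module.finrank ℚ (LinearMap.ker f) := by
    rw [hkerd]
    exact (Submodule.comapSubtypeEquivOfLe hker).finrank_eq
  rw [hrange, hkeq] at h1
  omega

/-- Multiplicity formula for barcodes of a finite filtration: for a finite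
persistence module `V₀ → ⋯ → V_N` of finite-dimensional `ℚ`-vector spaces and
`0 < j < k ≤ N` (so `V_{-1} = 0` plays no role), the persistent multiplicity
`μ^{j,k} = dim M^{j,k} - dim N^{j,k}`, with
`M^{j,k} = (i^{j,k})⁻¹(Im i^{j-1,k})` and
`N^{j,k} = (i^{j,k-1})⁻¹(Im i^{j-1,k-1})`, satisfies
`μ^{j,k} = (b^{j,k-1} - b^{j,k}) - (b^{j-1,k-1} - b^{j-1,k})`. -/
theorem persistent_multiplicity_formula
    (N : ℕ) (V : ℕ → Type*) [∀ t, AddCommGroup (V t)] [∀ t, Module ℚ (V t)]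
    [∀ t, FiniteDimensional ℚ (V t)]
    (i : ∀ j k : ℕ, j ≤ k → (V j →ₗ[ℚ] V k))
    (hid : ∀ t, i t t le_rfl = LinearMap.id)
    (hcomp : ∀ s t u (hst : s ≤ t) (htu : t ≤ u),
      i s u (hst.trans htu) = (i t u htu).comp (i s t hst))
    (j k : ℕ) (hj : 0 < j) (hjk : j < k) (hkN : k ≤ N) :
    (Module.finrank ℚ
        (Submodule.comap (i j k hjk.le)
          (LinearMap.range (i (j-1) k (by omega)))) : ℤ) -
      Module.finrank ℚ
        (Submodule.comap (i j (k-1) (by omega))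
          (LinearMap.range (i (j-1) (k-1) (by omega)))) =
    ((Module.finrank ℚ (LinearMap.range (i j (k-1) (by omega))) : ℤ) -
        Module.finrank ℚ (LinearMap.range (i j k hjk.le))) -
      ((Module.finrank ℚ (LinearMap.range (i (j-1) (k-1) (by omega))) : ℤ) -
        Module.finrank ℚ (LinearMap.range (i (j-1) k (by omega)))) := by
  have hle : ∀ (a b : ℕ) (hab : a ≤ b) (hjb : j - 1 ≤ a) (h1b : j - 1 ≤ b),
      LinearMap.range (i (j-1) b h1b) ≤ LinearMap.range (i a b hab) := by
    intro a b hab hjb h1b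
    rw [show i (j-1) b h1b = i (j-1) b (hjb.trans hab) from rfl,
      hcomp (j-1) a b hjb hab]
    exact LinearMap.range_comp_le_range _ _
  have h1 := finrank_comap_of_le' (i j k hjk.le) (LinearMap.range (i (j-1) k (by omega)))
    (hle j k hjk.le (by omega) (by omega))
  have h2 := finrank_comap_of_le' (i j (k-1) (by omega)) (LinearMap.range (i (j-1) (k-1) (by omega)))
    (hle j (k-1) (by omega) (by omega) (by omega))
  have h3 := LinearMap.finrank_range_add_finrank_ker (i j k hjk.le)
  have h4 := LinearMap.finrank_range_add_finrank_ker (i j (k-1) (by omega : j ≤ k-1))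
  rw [h1, h2]
  push_cast
  omega
end

section
/- Let (V_t, i^{s,t}) be a persistence module over a linearly ordered set T, let s ≤ t in T, and suppose i^{t',t} is an isomorphism for all t' in some interval [c, t) with c < t and s ≤ c. Then N^{s,t} = M^{s,t}, and hence the persistent multiplicity μ^{s,t} = dim(M^{s,t}/N^{s,t}) = 0. -/
/-- No bar can die at a time `t` where the persistence module is locally
constant to the left of `t`: if `i^{t',t}` is an isomorphism for all
`t' ∈ [c,t)` with `s ≤ c < t`, then
`N^{s,t} = ⋃_{s' < s ≤ t' < t} (i^{s,t'})⁻¹(Im i^{s',t'})` equals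
`M^{s,t} = ⋃_{s' < s} (i^{s,t})⁻¹(Im i^{s',t})`, hence the persistent
multiplicity `μ^{s,t} = dim(M^{s,t}/N^{s,t}) = 0`. -/
theorem no_bar_dies_at_locally_constant_time
    {T : Type*} [LinearOrder T]
    (V : T → Type*) [∀ t, AddCommGroup (V t)] [∀ t, Module ℚ (V t)]
    [∀ t, FiniteDimensional ℚ (V t)]
    (i : ∀ s t : T, s ≤ t → (V s →ₗ[ℚ] V t))
    (hid : ∀ t, i t t le_rfl = LinearMap.id)
    (hcomp : ∀ s t u (hst : s ≤ t) (htu : t ≤ u),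
      i s u (hst.trans htu) = (i t u htu).comp (i s t hst))
    (s t c : T) (hst : s ≤ t) (hsc : s ≤ c) (hct : c < t)
    (hiso : ∀ t' (_ : c ≤ t') (h2 : t' < t), Function.Bijective (i t' t h2.le)) :
    (⨆ (s' : T) (h1 : s' < s) (t' : T) (h2 : s ≤ t') (_h3 : t' < t),
        Submodule.comap (i s t' h2) (LinearMap.range (i s' t' (h1.le.trans h2)))) =
      (⨆ (s' : T) (h' : s' < s),
        Submodule.comap (i s t hst) (LinearMap.range (i s' t (h'.le.trans hst)))) ∧
    Module.finrank ℚ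
        ↥(⨆ (s' : T) (h' : s' < s),
            Submodule.comap (i s t hst) (LinearMap.range (i s' t (h'.le.trans hst)))) -
      Module.finrank ℚ
        ↥(⨆ (s' : T) (h1 : s' < s) (t' : T) (h2 : s ≤ t') (_h3 : t' < t),
            Submodule.comap (i s t' h2)
              (LinearMap.range (i s' t' (h1.le.trans h2)))) = 0 := by
  have key : (⨆ (s' : T) (h1 : s' < s) (t' : T) (h2 : s ≤ t') (_h3 : t' < t),
        Submodule.comap (i s t' h2) (LinearMap.range (i s' t' (h1.le.trans h2)))) =
      (⨆ (s' : T) (h' : s' < s),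
        Submodule.comap (i s t hst) (LinearMap.range (i s' t (h'.le.trans hst)))) := by
    apply le_antisymm
    · refine iSup_le fun s' => iSup_le fun h1 => iSup_le fun t' => iSup_le fun h2 =>
        iSup_le fun h3 => fun x hx => ?_
      obtain ⟨y, hy⟩ := Submodule.mem_comap.mp hx
      refine Submodule.mem_iSup_of_mem s' (Submodule.mem_iSup_of_mem h1 ?_)
      refine Submodule.mem_comap.mpr ⟨y, ?_⟩
      rw [hcomp s' t' t (h1.le.trans h2) h3.le, hcomp s t' t h2 h3.le]
      simp only [LinearMap.comp_apply, hy]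
    · refine iSup_le fun s' => iSup_le fun h1 => fun x hx => ?_
      obtain ⟨y, hy⟩ := Submodule.mem_comap.mp hx
      refine Submodule.mem_iSup_of_mem s' (Submodule.mem_iSup_of_mem h1
        (Submodule.mem_iSup_of_mem c (Submodule.mem_iSup_of_mem hsc
        (Submodule.mem_iSup_of_mem hct ?_))))
      refine Submodule.mem_comap.mpr ⟨y, ?_⟩
      apply (hiso c le_rfl hct).1
      have e1 := congrFun (congrArg DFunLike.coe (hcomp s' c t (h1.le.trans hsc) hct.le)) y
      have e2 := congrFun (congrArg DFunLike.coe (hcomp s c t hsc hct.le)) x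
      simp only [LinearMap.comp_apply] at e1 e2
      rw [← e1, ← e2]
      exact hy
  exact ⟨key, by rw [key, Nat.sub_self]⟩
end

section
/- (Thom's Lemma) Let f ∈ R[X] be a univariate polynomial of degree p over a real closed field R (or over ℝ), and let σ : {f, f', ..., f^{(p)}} → {-1, 0, 1} be a sign condition on f and all its derivatives. Then the realization {x ∈ R | sign(f^{(i)}(x)) = σ(f^{(i)}) for all 0 ≤ i ≤ p} is either empty, a single point, or an open interval. -/
open Polynomial Set

/-- A set is empty, a singleton, or a nonempty open interval. -/
def ThomGood (S : Set ℝ) : Prop :=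
  S = ∅ ∨ (∃ x : ℝ, S = {x}) ∨ (IsOpen S ∧ S.OrdConnected ∧ S.Nonempty)

lemma thom_good_inter_sign (e : ℝ → ℝ) (he : Continuous e) (A : Set ℝ)
    (hAo : IsOpen A) (hAc : A.OrdConnected)
    (hm : StrictMonoOn e A ∨ StrictAntiOn e A) (s : SignType) :
    ThomGood {x | x ∈ A ∧ SignType.sign (e x) = s} := by
  set S : Set ℝ := {x | x ∈ A ∧ SignType.sign (e x) = s} with hS
  rcases eq_empty_or_nonempty S with h | ⟨x₀, hx₀⟩
  · exact Or.inl h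
  cases s with
  | zero =>
    refine Or.inr (Or.inl ⟨x₀, ?_⟩)
    have hinj : Set.InjOn e A := by
      rcases hm with hm | hm
      exacts [hm.injOn, hm.injOn]
    refine Set.eq_singleton_iff_unique_mem.mpr ⟨hx₀, fun y hy => ?_⟩
    have h1 : e y = 0 := sign_eq_zero_iff.mp hy.2
    have h2 : e x₀ = 0 := sign_eq_zero_iff.mp hx₀.2
    exact hinj hy.1 hx₀.1 (h1.trans h2.symm)
  | pos =>
    refine Or.inr (Or.inr ⟨?_, ?_, ⟨x₀, hx₀⟩⟩)
    · have : S = A ∩ e ⁻¹' (Set.Ioi 0) := by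
        ext x; simp [hS, sign_eq_one_iff, Set.mem_Ioi]
      rw [this]
      exact hAo.inter (isOpen_Ioi.preimage he)
    · refine ⟨fun x hx y hy z hz => ?_⟩
      have hzA : z ∈ A := hAc.out hx.1 hy.1 hz
      refine ⟨hzA, sign_eq_one_iff.mpr ?_⟩
      rcases hm with hmo | hmo
      · have := hmo.monotoneOn hx.1 hzA hz.1
        have hx2 : (0:ℝ) < e x := sign_eq_one_iff.mp hx.2
        linarith
      · have := hmo.antitoneOn hzA hy.1 hz.2
        have hy2 : (0:ℝ) < e y := sign_eq_one_iff.mp hy.2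
        linarith
  | neg =>
    refine Or.inr (Or.inr ⟨?_, ?_, ⟨x₀, hx₀⟩⟩)
    · have : S = A ∩ e ⁻¹' (Set.Iio 0) := by
        ext x; simp [hS, sign_eq_neg_one_iff, Set.mem_Iio]
      rw [this]
      exact hAo.inter (isOpen_Iio.preimage he)
    · refine ⟨fun x hx y hy z hz => ?_⟩
      have hzA : z ∈ A := hAc.out hx.1 hy.1 hz
      refine ⟨hzA, sign_eq_neg_one_iff.mpr ?_⟩
      rcases hm with hmo | hmo
      · have := hmo.monotoneOn hzA hy.1 hz.2
        have hy2 : e y < 0 := sign_eq_neg_one_iff.mp hy.2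
        linarith
      · have := hmo.antitoneOn hx.1 hzA hz.1
        have hx2 : e x < 0 := sign_eq_neg_one_iff.mp hx.2
        linarith

lemma thom_aux : ∀ (n : ℕ) (f : Polynomial ℝ), f.natDegree ≤ n → ∀ (σ : ℕ → SignType),
    ThomGood {x : ℝ | ∀ k ≤ n, SignType.sign ((Polynomial.derivative^[k] f).eval x) = σ k} := by
  intro n
  induction n with
  | zero =>
    intro f hf σ
    obtain ⟨c, rfl⟩ := Polynomial.natDegree_eq_zero.mp (Nat.le_zero.mp hf)
    have hset : {x : ℝ | ∀ k ≤ 0, SignType.sign ((Polynomial.derivative^[k] (C c)).eval x) = σ k}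
        = {x : ℝ | SignType.sign c = σ 0} := by
      ext x
      simp only [Set.mem_setOf_eq, Nat.le_zero]
      constructor
      · intro h; simpa using h 0 rfl
      · intro h k hk; subst hk; simpa using h
    rw [hset]
    by_cases h : SignType.sign c = σ 0
    · refine Or.inr (Or.inr ⟨?_, ?_, ?_⟩)
      · simp [h, isOpen_univ]
      · simp [h]; exact Set.ordConnected_univ
      · exact ⟨0, h⟩
    · left; ext x; simp [h]
  | succ n ih =>
    intro f hf σ
    set g := Polynomial.derivative f with hg
    have hgd : g.natDegree ≤ n := by
      rw [hg]
      exact le_trans (Polynomial.natDegree_derivative_le f) (by omega)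
    set A : Set ℝ := {x : ℝ | ∀ k ≤ n, SignType.sign ((Polynomial.derivative^[k] g).eval x) = σ (k+1)} with hA
    have hSA : {x : ℝ | ∀ k ≤ n+1, SignType.sign ((Polynomial.derivative^[k] f).eval x) = σ k}
        = {x : ℝ | x ∈ A ∧ SignType.sign (f.eval x) = σ 0} := by
      ext x
      simp only [Set.mem_setOf_eq, hA]
      constructor
      · intro h
        refine ⟨fun k hk => ?_, by simpa using h 0 (Nat.zero_le _)⟩
        have := h (k+1) (by omega)
        rwa [Function.iterate_succ_apply] at this
      · rintro ⟨h1, h0⟩ k hk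
        cases k with
        | zero => simpa using h0
        | succ k => rw [Function.iterate_succ_apply]; exact h1 k (by omega)
    rw [hSA]
    have hAmem : ∀ x ∈ A, SignType.sign (g.eval x) = σ 1 := by
      intro x hx
      simpa using hx 0 (Nat.zero_le _)
    rcases ih g hgd (fun k => σ (k+1)) with hAe | ⟨a, ha⟩ | ⟨hAo, hAc, hAne⟩
    · have hAe' : A = ∅ := hA.trans hAe
      left; ext x
      simp only [Set.mem_setOf_eq, hAe', Set.mem_empty_iff_false, false_and]
    · have ha' : A = ({a} : Set ℝ) := hA.trans ha
      rcases eq_empty_or_nonempty {x : ℝ | x ∈ A ∧ SignType.sign (f.eval x) = σ 0} with h | ⟨x₀, hx₀⟩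
      · exact Or.inl h
      refine Or.inr (Or.inl ⟨x₀, Set.eq_singleton_iff_unique_mem.mpr ⟨hx₀, fun y hy => ?_⟩⟩)
      have h1 : y ∈ ({a} : Set ℝ) := ha' ▸ hy.1
      have h2 : x₀ ∈ ({a} : Set ℝ) := ha' ▸ hx₀.1
      simp only [Set.mem_singleton_iff] at h1 h2
      rw [h1, h2]
    · -- A is a nonempty open interval
      rw [← hA] at hAo hAc hAne
      cases h1 : σ 1 with
      | zero =>
        -- g vanishes on A, so g = 0, so f is constant
        obtain ⟨a, haA⟩ := hAne
        have hAinf : A.Infinite := infinite_of_mem_nhds a (hAo.mem_nhds haA)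
        have hg0 : g = 0 := by
          apply Polynomial.eq_zero_of_infinite_isRoot
          refine hAinf.mono fun x hx => ?_
          have := hAmem x hx
          rw [h1] at this
          exact sign_eq_zero_iff.mp this
        obtain ⟨c, hfc⟩ : ∃ c, f = C c := ⟨f.coeff 0, Polynomial.eq_C_of_derivative_eq_zero hg0⟩
        by_cases hc : SignType.sign c = σ 0
        · refine Or.inr (Or.inr ⟨?_, ?_, ?_⟩)
          · have : {x : ℝ | x ∈ A ∧ SignType.sign (f.eval x) = σ 0} = A := by
              ext x; simp [hfc, hc]
            rw [this]; exact hAo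
          · have : {x : ℝ | x ∈ A ∧ SignType.sign (f.eval x) = σ 0} = A := by
              ext x; simp [hfc, hc]
            rw [this]; exact hAc
          · exact ⟨a, haA, by simp [hfc, hc]⟩
        · left; ext x; simp [hfc, hc]
      | pos =>
        have hmono : StrictMonoOn (fun x => f.eval x) A := by
          apply strictMonoOn_of_deriv_pos (convex_iff_ordConnected.mpr hAc)
            (f.continuous.continuousOn)
          · intro x hx
            rw [hAo.interior_eq] at hx
            rw [Polynomial.deriv]
            have := hAmem x hx
            rw [h1] at this
            exact sign_eq_one_iff.mp this
        exact thom_good_inter_sign _ f.continuous A hAo hAc (Or.inl hmono) (σ 0)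
      | neg =>
        have hmono : StrictAntiOn (fun x => f.eval x) A := by
          apply strictAntiOn_of_deriv_neg (convex_iff_ordConnected.mpr hAc)
            (f.continuous.continuousOn)
          · intro x hx
            rw [hAo.interior_eq] at hx
            rw [Polynomial.deriv]
            have := hAmem x hx
            rw [h1] at this
            exact sign_eq_neg_one_iff.mp this
        exact thom_good_inter_sign _ f.continuous A hAo hAc (Or.inr hmono) (σ 0)

/-- Thom's Lemma: for a univariate real polynomial `f` of degree `p` and a sign
condition `σ` on `f, f', …, f^{(p)}`, the realization
`{x | sign(f^{(i)}(x)) = σ i for all 0 ≤ i ≤ p}` is either empty, a single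
point, or an open interval. -/
theorem thom_lemma (f : Polynomial ℝ) (σ : ℕ → SignType) :
    {x : ℝ | ∀ k ≤ f.natDegree,
        SignType.sign ((Polynomial.derivative^[k] f).eval x) = σ k} = ∅ ∨
    (∃ x : ℝ, {x : ℝ | ∀ k ≤ f.natDegree,
        SignType.sign ((Polynomial.derivative^[k] f).eval x) = σ k} = {x}) ∨
    (IsOpen {x : ℝ | ∀ k ≤ f.natDegree,
        SignType.sign ((Polynomial.derivative^[k] f).eval x) = σ k} ∧
      Set.OrdConnected {x : ℝ | ∀ k ≤ f.natDegree,
        SignType.sign ((Polynomial.derivative^[k] f).eval x) = σ k} ∧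
      Set.Nonempty {x : ℝ | ∀ k ≤ f.natDegree,
        SignType.sign ((Polynomial.derivative^[k] f).eval x) = σ k}) :=
  thom_aux f.natDegree f le_rfl σ
end

section
/- Let F ⊂ ℝ[X] be a finite set of univariate polynomials closed under differentiation (0 ∉ F and for each f ∈ F, f' ∈ F or f' = 0), and let σ be a sign condition on F whose realization R(σ) ⊂ ℝ is an open interval (a,b). Then the realization of the relaxed weak sign condition σ̄ (replacing each strict sign by the corresponding weak one) is the closed interval [a,b]. -/
open Polynomial Set

private lemma thom_sigma_ne_zero {F : Finset (Polynomial ℝ)}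
    (hF0 : (0 : Polynomial ℝ) ∉ F)
    {σ : Polynomial ℝ → SignType} {a b : ℝ} (hab : a < b)
    (hsign : ∀ m ∈ Set.Ioo a b, ∀ f ∈ F, SignType.sign (f.eval m) = σ f)
    {f : Polynomial ℝ} (hf : f ∈ F) : σ f ≠ 0 := by
  intro h0
  apply hF0
  have hz : f = 0 := by
    apply Polynomial.eq_zero_of_infinite_isRoot
    apply Set.Infinite.mono (s := Set.Ioo a b)
    · intro m hm
      have := hsign m hm f hf
      rw [h0, sign_eq_zero_iff] at this
      exact this
    · exact Set.infinite_coe_iff.mp (Set.Ioo.infinite hab)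
  rwa [hz] at hf

private lemma thom_const {g : Polynomial ℝ} (hder : Polynomial.derivative g = 0)
    (m y : ℝ) : g.eval y = g.eval m := by
  have h0 : g.natDegree = 0 := Polynomial.natDegree_eq_zero_of_derivative_eq_zero hder
  rw [Polynomial.eq_C_of_natDegree_eq_zero h0]
  simp

/-- Key induction, right side: all signs stay strict on `[b, x)`. -/
private lemma thom_right {F : Finset (Polynomial ℝ)}
    (hF0 : (0 : Polynomial ℝ) ∉ F)
    (hFd : ∀ f ∈ F, Polynomial.derivative f ∈ F ∨ Polynomial.derivative f = 0)
    {σ : Polynomial ℝ → SignType} {a b x : ℝ} (hab : a < b) (hbx : b < x)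
    (hsign : ∀ m ∈ Set.Ioo a b, ∀ f ∈ F, SignType.sign (f.eval m) = σ f)
    (hwk : ∀ f ∈ F, (σ f = 1 → 0 ≤ f.eval x) ∧ (σ f = -1 → f.eval x ≤ 0) ∧
      (σ f = 0 → f.eval x = 0)) :
    ∀ (n : ℕ) (g : Polynomial ℝ), g ∈ F → g.natDegree ≤ n →
      ∀ y ∈ Set.Ico b x, SignType.sign (g.eval y) = σ g := by
  have hm0 : (a + b) / 2 ∈ Set.Ioo a b := ⟨by linarith, by linarith⟩
  intro n
  induction n with
  | zero =>
      intro g hg hdeg y _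
      have hder : Polynomial.derivative g = 0 := by
        rw [Polynomial.eq_C_of_natDegree_eq_zero (Nat.le_zero.mp hdeg)]
        simp
      rw [thom_const hder ((a + b) / 2) y]
      exact hsign _ hm0 g hg
  | succ n ih =>
      intro g hg hdeg y hy
      rcases hFd g hg with hder | hder
      · -- derivative belongs to F
        have hgnd : g.natDegree ≠ 0 := by
          intro h0
          apply hF0
          have hc : Polynomial.derivative g = 0 := by
            rw [Polynomial.eq_C_of_natDegree_eq_zero h0]; simp
          rwa [hc] at hder
        have hdd : (Polynomial.derivative g).natDegree ≤ n := by
          have := Polynomial.natDegree_derivative_lt (p := g) hgnd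
          omega
        have ihd := ih (Polynomial.derivative g) hder hdd
        have hσd := thom_sigma_ne_zero hF0 hab hsign hder
        have hσg := thom_sigma_ne_zero hF0 hab hsign hg
        have hyIoc : y ∈ Set.Ioc a x := ⟨lt_of_lt_of_le hab hy.1, le_of_lt hy.2⟩
        have hm0Ioc : (a + b) / 2 ∈ Set.Ioc a x := ⟨hm0.1, by linarith [hm0.2]⟩
        have hxIoc : x ∈ Set.Ioc a x := ⟨by linarith, le_refl x⟩
        have hm0y : (a + b) / 2 < y := lt_of_lt_of_le hm0.2 hy.1
        cases hd : σ (Polynomial.derivative g) with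
        | zero => exact absurd hd hσd
        | pos =>
            have hpos : ∀ z ∈ Set.Ioo a x, 0 < (Polynomial.derivative g).eval z := by
              intro z hz
              rcases lt_or_ge z b with hzb | hzb
              · have h := hsign z ⟨hz.1, hzb⟩ _ hder
                rw [hd] at h
                exact sign_eq_one_iff.mp h
              · have h := ihd z ⟨hzb, hz.2⟩
                rw [hd] at h
                exact sign_eq_one_iff.mp h
            have hmono : StrictMonoOn (fun z => g.eval z) (Set.Ioc a x) := by
              apply strictMonoOn_of_deriv_pos (convex_Ioc a x)
                (Polynomial.continuous g).continuousOn
              intro z hz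
              rw [interior_Ioc] at hz
              rw [Polynomial.deriv]
              exact hpos z hz
            cases hgσ : σ g with
            | zero => exact absurd hgσ hσg
            | pos =>
                have h1 := hsign _ hm0 g hg
                rw [hgσ] at h1
                have h2 : (0:ℝ) < g.eval ((a + b) / 2) := sign_eq_one_iff.mp h1
                have h3 := hmono hm0Ioc hyIoc hm0y
                exact sign_eq_one_iff.mpr (h2.trans h3)
            | neg =>
                have hx0 : g.eval x ≤ 0 := (hwk g hg).2.1 hgσ
                have h3 := hmono hyIoc hxIoc hy.2
                exact sign_eq_neg_one_iff.mpr (lt_of_lt_of_le h3 hx0)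
        | neg =>
            have hneg : ∀ z ∈ Set.Ioo a x, (Polynomial.derivative g).eval z < 0 := by
              intro z hz
              rcases lt_or_ge z b with hzb | hzb
              · have h := hsign z ⟨hz.1, hzb⟩ _ hder
                rw [hd] at h
                exact sign_eq_neg_one_iff.mp h
              · have h := ihd z ⟨hzb, hz.2⟩
                rw [hd] at h
                exact sign_eq_neg_one_iff.mp h
            have hanti : StrictAntiOn (fun z => g.eval z) (Set.Ioc a x) := by
              apply strictAntiOn_of_deriv_neg (convex_Ioc a x)
                (Polynomial.continuous g).continuousOn
              intro z hz
              rw [interior_Ioc] at hz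
              rw [Polynomial.deriv]
              exact hneg z hz
            cases hgσ : σ g with
            | zero => exact absurd hgσ hσg
            | pos =>
                have hx0 : (0:ℝ) ≤ g.eval x := (hwk g hg).1 hgσ
                have h3 := hanti hyIoc hxIoc hy.2
                exact sign_eq_one_iff.mpr (lt_of_le_of_lt hx0 h3)
            | neg =>
                have h1 := hsign _ hm0 g hg
                rw [hgσ] at h1
                have h2 : g.eval ((a + b) / 2) < 0 := sign_eq_neg_one_iff.mp h1
                have h3 := hanti hm0Ioc hyIoc hm0y
                exact sign_eq_neg_one_iff.mpr (h3.trans h2)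
      · -- derivative zero: constant
        rw [thom_const hder ((a + b) / 2) y]
        exact hsign _ hm0 g hg

/-- Key induction, left side: all signs stay strict on `(x, a]`. -/
private lemma thom_left {F : Finset (Polynomial ℝ)}
    (hF0 : (0 : Polynomial ℝ) ∉ F)
    (hFd : ∀ f ∈ F, Polynomial.derivative f ∈ F ∨ Polynomial.derivative f = 0)
    {σ : Polynomial ℝ → SignType} {a b x : ℝ} (hab : a < b) (hxa : x < a)
    (hsign : ∀ m ∈ Set.Ioo a b, ∀ f ∈ F, SignType.sign (f.eval m) = σ f)
    (hwk : ∀ f ∈ F, (σ f = 1 → 0 ≤ f.eval x) ∧ (σ f = -1 → f.eval x ≤ 0) ∧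
      (σ f = 0 → f.eval x = 0)) :
    ∀ (n : ℕ) (g : Polynomial ℝ), g ∈ F → g.natDegree ≤ n →
      ∀ y ∈ Set.Ioc x a, SignType.sign (g.eval y) = σ g := by
  have hm0 : (a + b) / 2 ∈ Set.Ioo a b := ⟨by linarith, by linarith⟩
  intro n
  induction n with
  | zero =>
      intro g hg hdeg y _
      have hder : Polynomial.derivative g = 0 := by
        rw [Polynomial.eq_C_of_natDegree_eq_zero (Nat.le_zero.mp hdeg)]
        simp
      rw [thom_const hder ((a + b) / 2) y]
      exact hsign _ hm0 g hg
  | succ n ih =>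
      intro g hg hdeg y hy
      rcases hFd g hg with hder | hder
      · have hgnd : g.natDegree ≠ 0 := by
          intro h0
          apply hF0
          have hc : Polynomial.derivative g = 0 := by
            rw [Polynomial.eq_C_of_natDegree_eq_zero h0]; simp
          rwa [hc] at hder
        have hdd : (Polynomial.derivative g).natDegree ≤ n := by
          have := Polynomial.natDegree_derivative_lt (p := g) hgnd
          omega
        have ihd := ih (Polynomial.derivative g) hder hdd
        have hσd := thom_sigma_ne_zero hF0 hab hsign hder
        have hσg := thom_sigma_ne_zero hF0 hab hsign hg
        have hyIco : y ∈ Set.Ico x b := ⟨le_of_lt hy.1, lt_of_le_of_lt hy.2 hab⟩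
        have hm0Ico : (a + b) / 2 ∈ Set.Ico x b := ⟨by linarith [hm0.1], hm0.2⟩
        have hxIco : x ∈ Set.Ico x b := ⟨le_refl x, by linarith⟩
        have hym0 : y < (a + b) / 2 := lt_of_le_of_lt hy.2 hm0.1
        cases hd : σ (Polynomial.derivative g) with
        | zero => exact absurd hd hσd
        | pos =>
            have hpos : ∀ z ∈ Set.Ioo x b, 0 < (Polynomial.derivative g).eval z := by
              intro z hz
              rcases le_or_gt z a with hza | hza
              · have h := ihd z ⟨hz.1, hza⟩
                rw [hd] at h
                exact sign_eq_one_iff.mp h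
              · have h := hsign z ⟨hza, hz.2⟩ _ hder
                rw [hd] at h
                exact sign_eq_one_iff.mp h
            have hmono : StrictMonoOn (fun z => g.eval z) (Set.Ico x b) := by
              apply strictMonoOn_of_deriv_pos (convex_Ico x b)
                (Polynomial.continuous g).continuousOn
              intro z hz
              rw [interior_Ico] at hz
              rw [Polynomial.deriv]
              exact hpos z hz
            cases hgσ : σ g with
            | zero => exact absurd hgσ hσg
            | pos =>
                have hx0 : (0:ℝ) ≤ g.eval x := (hwk g hg).1 hgσ
                have h3 := hmono hxIco hyIco hy.1
                exact sign_eq_one_iff.mpr (lt_of_le_of_lt hx0 h3)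
            | neg =>
                have h1 := hsign _ hm0 g hg
                rw [hgσ] at h1
                have h2 : g.eval ((a + b) / 2) < 0 := sign_eq_neg_one_iff.mp h1
                have h3 := hmono hyIco hm0Ico hym0
                exact sign_eq_neg_one_iff.mpr (h3.trans h2)
        | neg =>
            have hneg : ∀ z ∈ Set.Ioo x b, (Polynomial.derivative g).eval z < 0 := by
              intro z hz
              rcases le_or_gt z a with hza | hza
              · have h := ihd z ⟨hz.1, hza⟩
                rw [hd] at h
                exact sign_eq_neg_one_iff.mp h
              · have h := hsign z ⟨hza, hz.2⟩ _ hder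
                rw [hd] at h
                exact sign_eq_neg_one_iff.mp h
            have hanti : StrictAntiOn (fun z => g.eval z) (Set.Ico x b) := by
              apply strictAntiOn_of_deriv_neg (convex_Ico x b)
                (Polynomial.continuous g).continuousOn
              intro z hz
              rw [interior_Ico] at hz
              rw [Polynomial.deriv]
              exact hneg z hz
            cases hgσ : σ g with
            | zero => exact absurd hgσ hσg
            | pos =>
                have h1 := hsign _ hm0 g hg
                rw [hgσ] at h1
                have h2 : (0:ℝ) < g.eval ((a + b) / 2) := sign_eq_one_iff.mp h1
                have h3 := hanti hyIco hm0Ico hym0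
                exact sign_eq_one_iff.mpr (h2.trans h3)
            | neg =>
                have hx0 : g.eval x ≤ 0 := (hwk g hg).2.1 hgσ
                have h3 := hanti hxIco hyIco hy.1
                exact sign_eq_neg_one_iff.mpr (lt_of_lt_of_le h3 hx0)
      · rw [thom_const hder ((a + b) / 2) y]
        exact hsign _ hm0 g hg

/-- Generalized Thom's Lemma, part (d): if `F` is a finite set of univariate
real polynomials closed under differentiation and the realization of the sign
condition `σ` on `F` is the open interval `(a,b)`, then the realization of the
relaxed weak sign condition `σ̄` is the closed interval `[a,b]`. -/
theorem relaxation_of_sign_condition_closure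
    (F : Finset (Polynomial ℝ))
    (hF0 : (0 : Polynomial ℝ) ∉ F)
    (hFd : ∀ f ∈ F, Polynomial.derivative f ∈ F ∨ Polynomial.derivative f = 0)
    (σ : Polynomial ℝ → SignType) (a b : ℝ) (hab : a < b)
    (hreal : {x : ℝ | ∀ f ∈ F, SignType.sign (f.eval x) = σ f} = Set.Ioo a b) :
    {x : ℝ | ∀ f ∈ F,
        (σ f = 1 → 0 ≤ f.eval x) ∧
        (σ f = -1 → f.eval x ≤ 0) ∧
        (σ f = 0 → f.eval x = 0)} = Set.Icc a b := by
  have hsign : ∀ m ∈ Set.Ioo a b, ∀ f ∈ F, SignType.sign (f.eval m) = σ f := by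
    intro m hm
    rw [← hreal] at hm
    exact hm
  ext x
  simp only [Set.mem_setOf_eq, Set.mem_Icc]
  constructor
  · intro hx
    constructor
    · by_contra h
      push_neg at h
      have key := thom_left hF0 hFd hab h hsign hx
      have ha : a ∈ Set.Ioo a b := by
        rw [← hreal]
        intro f hf
        exact key f.natDegree f hf le_rfl a ⟨h, le_rfl⟩
      exact lt_irrefl a ha.1
    · by_contra h
      push_neg at h
      have key := thom_right hF0 hFd hab h hsign hx
      have hb : b ∈ Set.Ioo a b := by
        rw [← hreal]
        intro f hf
        exact key f.natDegree f hf le_rfl b ⟨le_rfl, h⟩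
      exact lt_irrefl b hb.2
  · intro hx f hf
    have hσ := thom_sigma_ne_zero hF0 hab hsign hf
    refine ⟨?_, ?_, fun h0 => absurd h0 hσ⟩
    · intro h1
      have hcl : Set.Icc a b ⊆ {z | 0 ≤ f.eval z} := by
        rw [← closure_Ioo hab.ne]
        apply closure_minimal
        · intro z hz
          have hs := hsign z hz f hf
          rw [h1] at hs
          exact le_of_lt (sign_eq_one_iff.mp hs)
        · exact isClosed_le continuous_const (Polynomial.continuous f)
      exact hcl hx
    · intro h1
      have hcl : Set.Icc a b ⊆ {z | f.eval z ≤ 0} := by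
        rw [← closure_Ioo hab.ne]
        apply closure_minimal
        · intro z hz
          have hs := hsign z hz f hf
          rw [h1] at hs
          exact le_of_lt (sign_eq_neg_one_iff.mp hs)
        · exact isClosed_le (Polynomial.continuous f) continuous_const
      exact hcl hx
end

section
/- Let V₀ → V₁ → ... → V_N be a finite persistence module of finite-dimensional Q-vector spaces with structure maps i^{j,k}, and set b^{j,k} = rank(i^{j,k}) with the convention b^{-1,k} = 0. Then for all 0 ≤ j ≤ k < N: (b^{j,k} - b^{j,k+1}) - (b^{j-1,k} - b^{j-1,k+1}) ≥ 0. -/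
theorem aux_rank {M V : Type*} [AddCommGroup M] [Module ℚ M] [AddCommGroup V] [Module ℚ V]
    [FiniteDimensional ℚ M] (f : M →ₗ[ℚ] V) (S : Submodule ℚ M) :
    Module.finrank ℚ (S.map f) + Module.finrank ℚ (S ⊓ LinearMap.ker f : Submodule ℚ M)
      = Module.finrank ℚ S := by
  have h := LinearMap.finrank_range_add_finrank_ker (f.domRestrict S)
  rw [LinearMap.range_domRestrict, LinearMap.ker_domRestrict] at h
  rw [show Submodule.comap S.subtype (LinearMap.ker f)
      = Submodule.comap S.subtype (S ⊓ LinearMap.ker f) by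
      simp [Submodule.comap_inf, Submodule.comap_subtype_self]] at h
  rwa [LinearEquiv.finrank_eq
    (Submodule.comapSubtypeEquivOfLe (inf_le_left : S ⊓ LinearMap.ker f ≤ S))] at h

/-- Nonnegativity of persistent multiplicities: for a finite persistence module
`V₀ → ⋯ → V_N` of finite-dimensional `ℚ`-vector spaces with
`b^{j,k} = rank(i^{j,k})` and the convention `b^{-1,k} = 0`, for all
`0 ≤ j ≤ k < N` one has
`(b^{j,k} - b^{j,k+1}) - (b^{j-1,k} - b^{j-1,k+1}) ≥ 0`. -/
theorem persistent_multiplicity_nonneg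
    (N : ℕ) (V : ℕ → Type*) [∀ t, AddCommGroup (V t)] [∀ t, Module ℚ (V t)]
    [∀ t, FiniteDimensional ℚ (V t)]
    (i : ∀ j k : ℕ, j ≤ k → (V j →ₗ[ℚ] V k))
    (hid : ∀ t, i t t le_rfl = LinearMap.id)
    (hcomp : ∀ s t u (hst : s ≤ t) (htu : t ≤ u),
      i s u (hst.trans htu) = (i t u htu).comp (i s t hst))
    (j k : ℕ) (hjk : j ≤ k) (hkN : k < N) :
    0 ≤ ((Module.finrank ℚ (LinearMap.range (i j k hjk)) : ℤ) -
          Module.finrank ℚ (LinearMap.range (i j (k+1) (by omega)))) -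
        (if j = 0 then 0 else
          (Module.finrank ℚ (LinearMap.range (i (j-1) k (by omega))) : ℤ) -
            Module.finrank ℚ (LinearMap.range (i (j-1) (k+1) (by omega)))) := by
  set f := i k (k+1) (by omega) with hf
  -- range of one-step extension is map of range under f
  have hstep : ∀ (m : ℕ) (hm : m ≤ k) (hm' : m ≤ k + 1),
      LinearMap.range (i m (k+1) hm') = (LinearMap.range (i m k hm)).map f := by
    intro m hm hm'
    have := hcomp m k (k+1) hm (by omega)
    rw [show hm' = hm.trans (by omega) from rfl, this, LinearMap.range_comp]
  have hj1 : LinearMap.range (i j (k+1) (by omega : j ≤ k+1))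
      = (LinearMap.range (i j k hjk)).map f := hstep j hjk _
  have hrank := aux_rank f (LinearMap.range (i j k hjk))
  by_cases h0 : j = 0
  · simp only [h0, if_pos]
    subst h0
    rw [hj1]
    have := Submodule.finrank_map_le f (LinearMap.range (i 0 k hjk))
    omega
  · rw [if_neg h0]
    have hj1' : LinearMap.range (i (j-1) (k+1) (by omega : j - 1 ≤ k+1))
        = (LinearMap.range (i (j-1) k (by omega))).map f := hstep (j-1) (by omega) _
    have hrank' := aux_rank f (LinearMap.range (i (j-1) k (by omega : j - 1 ≤ k)))
    -- S_{j-1} ≤ S_j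
    have hle : LinearMap.range (i (j-1) k (by omega : j - 1 ≤ k))
        ≤ LinearMap.range (i j k hjk) := by
      have hc := hcomp (j-1) j k (by omega) hjk
      rw [show (i (j-1) k (by omega : j - 1 ≤ k))
          = i (j-1) k ((by omega : j - 1 ≤ j).trans hjk) from rfl, hc,
        LinearMap.range_comp]
      exact LinearMap.map_le_range
    have hmono : Module.finrank ℚ
        (LinearMap.range (i (j-1) k (by omega : j - 1 ≤ k)) ⊓ LinearMap.ker f :
          Submodule ℚ (V k))
        ≤ Module.finrank ℚ
        (LinearMap.range (i j k hjk) ⊓ LinearMap.ker f : Submodule ℚ (V k)) :=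
      Submodule.finrank_mono (inf_le_inf_right _ hle)
    rw [hj1, hj1']
    omega
end
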